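/- arXiv:1812.11504 — 6 statements merged into one kernel-verified Lean document; each statement's English description precedes it below -/
import Mathlib

section
/- Let X and Y be complex Hilbert spaces, D ⊆ X a subset, F : D → Y a map, and q† ∈ D with q† ≠ 0. Let λ₀ ≥ 0 and let (P_λ)_{λ ≥ λ₀} be a family of orthogonal projection operators on X. Let f, g : [λ₀, ∞) → (0, ∞) be continuous functions such that f is strictly decreasing with f(λ) → 0 as λ → ∞ and g is strictly increasing with g(λ) → +∞ as λ → ∞. Assume there exist a concave index function Ψ₀, a constant Ĉ ≥ 0 and β ∈ (0,1) such that for all λ ≥ λ₀: (i) ‖q† − P_λ q†‖_X ≤ f(λ); and (ii) for all q ∈ D with ‖q† − q‖_X < (2/(1−β))‖q†‖_X one has Re⟨q†, P_λ(q† − q)⟩_X ≤ g(λ)·Ψ₀(‖F(q†) − F(q)‖_Y) + Ĉ·f(λ)·‖q − q†‖_X. Define Ψ(t) := inf_{λ ≥ λ₀} ( g(λ)·Ψ₀(t) + ((Ĉ+1)²/(2(1−β)))·f(λ)² ) for t > 0. Then for every q ∈ D, Re⟨q†, q† − q⟩_X ≤ ((1−β)/2)·‖q† − q‖_X² + Ψ(‖F(q†)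 − F(q)‖_Y). -/
open scoped InnerProductSpace
open Set Filter

/-- Lemma 3.1: sufficient condition for the variational source condition.
Under the approximation condition (i) and the cross-term estimate (ii) for a family
of orthogonal projections `P_λ` (`λ ≥ λ₀`), the VSC (in the equivalent form (3.1))
holds with the index function `Ψ(t) = inf_{λ ≥ λ₀} ( g(λ)Ψ₀(t) + (Ĉ+1)²/(2(1−β))·f(λ)² )`. -/
theorem stmt_0
    {X Y : Type*} [NormedAddCommGroup X] [InnerProductSpace ℂ X] [CompleteSpace X]
    [NormedAddCommGroup Y] [InnerProductSpace ℂ Y] [CompleteSpace Y]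
    (D : Set X) (F : X → Y) (qd : X) (hqD : qd ∈ D) (hq0 : qd ≠ 0)
    (lam0 : ℝ) (hlam0 : 0 ≤ lam0)
    -- the family of orthogonal projections (idempotent and self-adjoint)
    (P : ℝ → X →L[ℂ] X)
    (hPproj : ∀ l, lam0 ≤ l → ∀ x : X, P l (P l x) = P l x)
    (hPsa : ∀ l, lam0 ≤ l → ∀ x y : X, ⟪P l x, y⟫_ℂ = ⟪x, P l y⟫_ℂ)
    -- the functions f and g
    (f g : ℝ → ℝ)
    (hfpos : ∀ l, lam0 ≤ l → 0 < f l) (hgpos : ∀ l, lam0 ≤ l → 0 < g l)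
    (hfcont : ContinuousOn f (Ici lam0)) (hgcont : ContinuousOn g (Ici lam0))
    (hfanti : StrictAntiOn f (Ici lam0)) (hflim : Tendsto f atTop (nhds 0))
    (hgmono : StrictMonoOn g (Ici lam0)) (hglim : Tendsto g atTop atTop)
    -- Ψ₀ is a concave index function
    (Ψ₀ : ℝ → ℝ)
    (hΨ₀pos : ∀ t, 0 < t → 0 < Ψ₀ t)
    (hΨ₀cont : ContinuousOn Ψ₀ (Ioi 0))
    (hΨ₀mono : StrictMonoOn Ψ₀ (Ioi 0))
    (hΨ₀lim : Tendsto Ψ₀ (nhdsWithin 0 (Ioi 0)) (nhds 0))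
    (hΨ₀conc : ConcaveOn ℝ (Ioi 0) Ψ₀)
    -- the constants Ĉ and β
    (Ch : ℝ) (hCh : 0 ≤ Ch) (β : ℝ) (hβ : β ∈ Ioo (0 : ℝ) 1)
    -- condition (i): approximation property of the projections
    (h1 : ∀ l, lam0 ≤ l → ‖qd - P l qd‖ ≤ f l)
    -- condition (ii): cross-term estimate
    (h2 : ∀ l, lam0 ≤ l → ∀ q ∈ D, ‖qd - q‖ < 2 / (1 - β) * ‖qd‖ →
      (⟪qd, P l (qd - q)⟫_ℂ).re ≤
        g l * Ψ₀ ‖F qd - F q‖ + Ch * f l * ‖q - qd‖)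
    -- the resulting index function Ψ
    (Ψ : ℝ → ℝ)
    (hΨ : ∀ t, Ψ t =
      sInf ((fun l => g l * Ψ₀ t + (Ch + 1) ^ 2 / (2 * (1 - β)) * f l ^ 2) '' Ici lam0)) :
    ∀ q ∈ D, (⟪qd, qd - q⟫_ℂ).re ≤ (1 - β) / 2 * ‖qd - q‖ ^ 2 + Ψ ‖F qd - F q‖ := by
  intro q hq
  have h1β : (0:ℝ) < 1 - β := by linarith [hβ.2]
  set t := ‖F qd - F q‖ with ht
  set c : ℝ := (Ch + 1) ^ 2 / (2 * (1 - β)) with hc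
  have hcpos : 0 < c := by positivity
  set S : Set ℝ := (fun l => g l * Ψ₀ t + c * f l ^ 2) '' Ici lam0 with hS
  have hSne : S.Nonempty := ⟨_, ⟨lam0, self_mem_Ici, rfl⟩⟩
  have hΨt : Ψ t = sInf S := hΨ t
  by_cases hcase : ‖qd - q‖ < 2 / (1 - β) * ‖qd‖
  · -- main case
    have key : ∀ x ∈ S, (⟪qd, qd - q⟫_ℂ).re - (1 - β) / 2 * ‖qd - q‖ ^ 2 ≤ x := by
      rintro x ⟨l, hl, rfl⟩
      simp only
      have hl : lam0 ≤ l := hl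
      have e1 : (⟪qd, qd - q⟫_ℂ) = ⟪qd - P l qd, qd - q⟫_ℂ + ⟪qd, P l (qd - q)⟫_ℂ := by
        rw [← hPsa l hl qd (qd - q), ← inner_add_left, sub_add_cancel]
      have hb1 : (⟪qd - P l qd, qd - q⟫_ℂ).re ≤ f l * ‖qd - q‖ :=
        le_trans (re_inner_le_norm (𝕜 := ℂ) _ _)
          (mul_le_mul_of_nonneg_right (h1 l hl) (norm_nonneg _))
      have hb2 : (⟪qd, P l (qd - q)⟫_ℂ).re ≤ g l * Ψ₀ t + Ch * f l * ‖q - qd‖ :=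
        h2 l hl q hq hcase
      have hnn : ‖q - qd‖ = ‖qd - q‖ := norm_sub_rev _ _
      have hcf : c * (2 * (1 - β)) * f l ^ 2 = (Ch + 1) ^ 2 * f l ^ 2 := by
        rw [hc, div_mul_cancel₀]
        positivity
      have young : (Ch + 1) * f l * ‖qd - q‖ ≤ (1 - β) / 2 * ‖qd - q‖ ^ 2 + c * f l ^ 2 := by
        nlinarith [sq_nonneg ((Ch + 1) * f l - (1 - β) * ‖qd - q‖), hcf, h1β,
          sq_nonneg (f l), sq_nonneg ‖qd - q‖]
      have esum : (⟪qd, qd - q⟫_ℂ).re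
          = (⟪qd - P l qd, qd - q⟫_ℂ).re + (⟪qd, P l (qd - q)⟫_ℂ).re := by
        rw [e1, Complex.add_re]
      rw [hnn] at hb2
      linarith
    have := le_csInf hSne key
    rw [hΨt]
    linarith
  · -- degenerate case
    push_neg at hcase
    have hcs : (⟪qd, qd - q⟫_ℂ).re ≤ ‖qd‖ * ‖qd - q‖ := re_inner_le_norm (𝕜 := ℂ) _ _
    have hqd : ‖qd‖ ≤ (1 - β) / 2 * ‖qd - q‖ := by
      rw [div_mul_eq_mul_div, div_le_iff₀ h1β] at hcase
      linarith
    have hΨnn : 0 ≤ Ψ t := by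
      rw [hΨt]
      by_cases hψ : 0 ≤ Ψ₀ t
      · apply Real.sInf_nonneg
        rintro x ⟨l, hl, rfl⟩
        have := (hgpos l hl).le
        have := (hfpos l hl).le
        positivity
      · push_neg at hψ
        have hnb : ¬ BddBelow S := by
          rintro ⟨m, hm⟩
          obtain ⟨l, hlg, hl⟩ := ((hglim.eventually_gt_atTop
            ((c * f lam0 ^ 2 - m) / (-Ψ₀ t))).and (eventually_ge_atTop lam0)).exists
          have hxS : g l * Ψ₀ t + c * f l ^ 2 ∈ S := ⟨l, hl, rfl⟩
          have hmx := hm hxS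
          have hfle : f l ≤ f lam0 := hfanti.antitoneOn self_mem_Ici hl hl
          have hfl2 : f l ^ 2 ≤ f lam0 ^ 2 := by
            have := (hfpos l hl).le
            nlinarith
          have hψ' : 0 < -Ψ₀ t := by linarith
          have : (c * f lam0 ^ 2 - m) / (-Ψ₀ t) * (-Ψ₀ t) < g l * (-Ψ₀ t) :=
            mul_lt_mul_of_pos_right hlg hψ'
          rw [div_mul_cancel₀ _ (ne_of_gt hψ')] at this
          nlinarith
        rw [Real.sInf_of_not_bddBelow hnb]
    have hn2 : ‖qd‖ * ‖qd - q‖ ≤ (1 - β) / 2 * ‖qd - q‖ ^ 2 := by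
      have := norm_nonneg (qd - q)
      nlinarith
    linarith
end

section
/- Let λ₀ ≥ 0 and let f, g : [λ₀, ∞) → (0, ∞) be continuous functions such that f is strictly decreasing with f(λ) → 0 as λ → ∞ and g is strictly increasing with g(λ) → +∞ as λ → ∞. Let Ψ₀ be a concave index function and let c > 0 be a constant. Define Ψ(t) := inf_{λ ≥ λ₀} ( g(λ)·Ψ₀(t) + c·f(λ)² ) for t > 0. Then Ψ maps (0,∞) into (0,∞), and Ψ is concave, continuous and strictly increasing on (0,∞). -/
open Set Filter

/-- the function `Ψ(t) = inf_{λ ≥ λ₀} ( g(λ)·Ψ₀(t) + c·f(λ)² )` is positive,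
concave, continuous and strictly increasing on `(0,∞)`. -/
theorem stmt_1 (lam0 : ℝ) (hlam0 : 0 ≤ lam0)
    (f g : ℝ → ℝ)
    (hfpos : ∀ l, lam0 ≤ l → 0 < f l) (hgpos : ∀ l, lam0 ≤ l → 0 < g l)
    (hfcont : ContinuousOn f (Ici lam0)) (hgcont : ContinuousOn g (Ici lam0))
    (hfanti : StrictAntiOn f (Ici lam0)) (hflim : Tendsto f atTop (nhds 0))
    (hgmono : StrictMonoOn g (Ici lam0)) (hglim : Tendsto g atTop atTop)
    -- Ψ₀ is a concave index function
    (Ψ₀ : ℝ → ℝ)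
    (hΨ₀pos : ∀ t, 0 < t → 0 < Ψ₀ t)
    (hΨ₀cont : ContinuousOn Ψ₀ (Ioi 0))
    (hΨ₀mono : StrictMonoOn Ψ₀ (Ioi 0))
    (hΨ₀lim : Tendsto Ψ₀ (nhdsWithin 0 (Ioi 0)) (nhds 0))
    (hΨ₀conc : ConcaveOn ℝ (Ioi 0) Ψ₀)
    (c : ℝ) (hc : 0 < c)
    (Ψ : ℝ → ℝ)
    (hΨ : ∀ t, Ψ t = sInf ((fun l => g l * Ψ₀ t + c * f l ^ 2) '' Ici lam0)) :
    (∀ t, 0 < t → 0 < Ψ t) ∧ ConcaveOn ℝ (Ioi 0) Ψ ∧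
      ContinuousOn Ψ (Ioi 0) ∧ StrictMonoOn Ψ (Ioi 0) := by
  set S : ℝ → Set ℝ := fun t => (fun l => g l * Ψ₀ t + c * f l ^ 2) '' Ici lam0 with hS
  have hne : ∀ t, (S t).Nonempty := fun t => ⟨_, lam0, self_mem_Ici, rfl⟩
  have hglb : ∀ l, lam0 ≤ l → g lam0 ≤ g l := fun l hl =>
    hgmono.monotoneOn self_mem_Ici hl hl
  -- lower bound on elements
  have helem : ∀ t, 0 < t → ∀ x ∈ S t, g lam0 * Ψ₀ t ≤ x := by
    rintro t ht x ⟨l, hl, rfl⟩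
    have h1 : g lam0 * Ψ₀ t ≤ g l * Ψ₀ t :=
      mul_le_mul_of_nonneg_right (hglb l hl) (hΨ₀pos t ht).le
    have h2 : 0 ≤ c * f l ^ 2 := by positivity
    show g lam0 * Ψ₀ t ≤ g l * Ψ₀ t + c * f l ^ 2
    linarith
  have hbdd : ∀ t, 0 < t → BddBelow (S t) := fun t ht => ⟨_, helem t ht⟩
  have hlb : ∀ t, 0 < t → g lam0 * Ψ₀ t ≤ Ψ t := by
    intro t ht
    rw [hΨ]
    exact le_csInf (hne t) (helem t ht)
  have hpos : ∀ t, 0 < t → 0 < Ψ t := fun t ht =>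
    lt_of_lt_of_le (mul_pos (hgpos lam0 le_rfl) (hΨ₀pos t ht)) (hlb t ht)
  have hconc : ConcaveOn ℝ (Ioi 0) Ψ := by
    refine ⟨convex_Ioi 0, ?_⟩
    intro x hx y hy a b ha hb hab
    have hxy : a • x + b • y ∈ Ioi (0:ℝ) := (convex_Ioi 0) hx hy ha hb hab
    rw [hΨ (a • x + b • y)]
    refine le_csInf (hne _) ?_
    rintro z ⟨l, hl, rfl⟩
    have hΨ₀c : a • Ψ₀ x + b • Ψ₀ y ≤ Ψ₀ (a • x + b • y) := hΨ₀conc.2 hx hy ha hb hab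
    have hx1 : Ψ x ≤ g l * Ψ₀ x + c * f l ^ 2 := by
      rw [hΨ]; exact csInf_le (hbdd x hx) ⟨l, hl, rfl⟩
    have hy1 : Ψ y ≤ g l * Ψ₀ y + c * f l ^ 2 := by
      rw [hΨ]; exact csInf_le (hbdd y hy) ⟨l, hl, rfl⟩
    have hgl : 0 < g l := hgpos l hl
    have h3 : g l * (a * Ψ₀ x + b * Ψ₀ y) ≤ g l * Ψ₀ (a • x + b • y) := by
      refine mul_le_mul_of_nonneg_left ?_ hgl.le
      simpa [smul_eq_mul] using hΨ₀c
    have h4 : a * Ψ x ≤ a * (g l * Ψ₀ x + c * f l ^ 2) :=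
      mul_le_mul_of_nonneg_left hx1 ha
    have h5 : b * Ψ y ≤ b * (g l * Ψ₀ y + c * f l ^ 2) :=
      mul_le_mul_of_nonneg_left hy1 hb
    have h6 : a * (g l * Ψ₀ x + c * f l ^ 2) + b * (g l * Ψ₀ y + c * f l ^ 2)
        = g l * (a * Ψ₀ x + b * Ψ₀ y) + (a + b) * (c * f l ^ 2) := by ring
    rw [hab, one_mul] at h6
    show a • Ψ x + b • Ψ y ≤ g l * Ψ₀ (a • x + b • y) + c * f l ^ 2
    simp only [smul_eq_mul] at *
    linarith
  have hmono : StrictMonoOn Ψ (Ioi 0) := by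
    intro t1 ht1 t2 ht2 h12
    have hδ : 0 < Ψ₀ t2 - Ψ₀ t1 := sub_pos.mpr (hΨ₀mono ht1 ht2 h12)
    have key : Ψ t1 + g lam0 * (Ψ₀ t2 - Ψ₀ t1) ≤ Ψ t2 := by
      rw [hΨ t2]
      refine le_csInf (hne t2) ?_
      rintro x ⟨l, hl, rfl⟩
      have h1 : Ψ t1 ≤ g l * Ψ₀ t1 + c * f l ^ 2 := by
        rw [hΨ]; exact csInf_le (hbdd t1 ht1) ⟨l, hl, rfl⟩
      have h2 : g lam0 * (Ψ₀ t2 - Ψ₀ t1) ≤ g l * (Ψ₀ t2 - Ψ₀ t1) :=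
        mul_le_mul_of_nonneg_right (hglb l hl) hδ.le
      show Ψ t1 + g lam0 * (Ψ₀ t2 - Ψ₀ t1) ≤ g l * Ψ₀ t2 + c * f l ^ 2
      nlinarith
    have : 0 < g lam0 * (Ψ₀ t2 - Ψ₀ t1) := mul_pos (hgpos lam0 le_rfl) hδ
    linarith
  exact ⟨hpos, hconc, hconc.continuousOn isOpen_Ioi, hmono⟩
end

section
/- Let λ₀ ≥ 0 and let f, g : [λ₀, ∞) → (0, ∞) be continuous functions such that f is strictly decreasing with f(λ) → 0 as λ → ∞ and g is strictly increasing with g(λ) → +∞ as λ → ∞. Let Ψ₀ be a concave index function and let c > 0 be a constant. Define Θ(λ) := c·f(λ)²/g(λ) for λ ≥ λ₀ and Ψ(t) := inf_{λ ≥ λ₀} ( g(λ)·Ψ₀(t) + c·f(λ)² ) for t > 0. Then Θ is a continuous, strictly decreasing bijection from [λ₀,∞) onto (0, Θ(λ₀)], and for every δ > 0 with Ψ₀(δ) ≤ Θ(λ₀) one has Ψ(δ) ≤ 2c·f(Θ⁻¹(Ψ₀(δ)))². In particular, Ψ(δ) → 0 as δ → 0⁺. -/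
open Set Filter Topology

/-!
`Θ = c f² / g` is a positive, strictly decreasing quotient whose numerator tends to `0` while its
denominator stays above `g(λ₀)`, so by the intermediate value theorem it maps `[λ₀, ∞)` onto
`(0, Θ(λ₀)]`. Evaluating the infimum defining `Ψ(δ)` at the `λ` with `Θ(λ) = Ψ₀(δ)` balances its
two terms, `g(λ) Ψ₀(δ) = c f(λ)²`. For the limit, first fix `λ` with `c f(λ)²` small and then let
`Ψ₀(δ) → 0`.
-/

section InfimumOfAffineFamily

variable {α ι : Type*} {s : Set ι} {a b : ι → ℝ}

theorem zero_mem_lowerBounds_image_mul_add (ha : ∀ i ∈ s, 0 ≤ a i) (hb : ∀ i ∈ s, 0 ≤ b i)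
    {x : ℝ} (hx : 0 ≤ x) : (0 : ℝ) ∈ lowerBounds ((fun i => a i * x + b i) '' s) := by
  rintro _ ⟨i, hi, rfl⟩
  exact add_nonneg (mul_nonneg (ha i hi) hx) (hb i hi)

theorem sInf_image_mul_add_le (ha : ∀ i ∈ s, 0 ≤ a i) (hb : ∀ i ∈ s, 0 ≤ b i)
    {x : ℝ} (hx : 0 ≤ x) {i : ι} (hi : i ∈ s) :
    sInf ((fun i => a i * x + b i) '' s) ≤ a i * x + b i :=
  csInf_le ⟨0, zero_mem_lowerBounds_image_mul_add ha hb hx⟩ (mem_image_of_mem _ hi)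

theorem tendsto_sInf_image_mul_add_zero {F : Filter α} {φ : α → ℝ}
    (ha : ∀ i ∈ s, 0 ≤ a i) (hb : ∀ i ∈ s, 0 ≤ b i) (hb0 : ∀ ε > 0, ∃ i ∈ s, b i < ε)
    (hφ0 : ∀ᶠ t in F, 0 ≤ φ t) (hφ : Tendsto φ F (𝓝 0)) :
    Tendsto (fun t => sInf ((fun i => a i * φ t + b i) '' s)) F (𝓝 0) := by
  refine tendsto_order.2 ⟨fun ε hε => ?_, fun ε hε => ?_⟩
  · filter_upwards [hφ0] with t ht
    exact hε.trans_le (Real.sInf_nonneg (zero_mem_lowerBounds_image_mul_add ha hb ht))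
  · obtain ⟨i, hi, hbi⟩ := hb0 ε hε
    have hlim : Tendsto (fun t => a i * φ t + b i) F (𝓝 (b i)) := by
      simpa using (hφ.const_mul (a i)).add_const (b i)
    filter_upwards [hφ0, hlim.eventually_lt_const hbi] with t ht hlt
    exact (sInf_image_mul_add_le ha hb ht hi).trans_lt hlt

end InfimumOfAffineFamily

section Quotient

variable {f g : ℝ → ℝ} {c : ℝ}

theorem strictAntiOn_const_mul_sq_div {s : Set ℝ} (hc : 0 < c) (hf : ∀ x ∈ s, 0 < f x)
    (hg : ∀ x ∈ s, 0 < g x) (hfa : StrictAntiOn f s) (hgm : MonotoneOn g s) :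
    StrictAntiOn (fun x => c * f x ^ 2 / g x) s := by
  intro x hx y hy hxy
  have hsq : f y ^ 2 < f x ^ 2 := pow_lt_pow_left₀ (hfa hx hy hxy) (hf y hy).le two_ne_zero
  have hfy := hf y hy
  exact div_lt_div₀ (mul_lt_mul_of_pos_left hsq hc) (hgm hx hy hxy.le) (by positivity) (hg x hx)

theorem tendsto_const_mul_sq_div_atTop_zero {x₀ : ℝ} (hc : 0 ≤ c) (hf : Tendsto f atTop (𝓝 0))
    (hg₀ : 0 < g x₀) (hg : ∀ x, x₀ ≤ x → g x₀ ≤ g x) :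
    Tendsto (fun x => c * f x ^ 2 / g x) atTop (𝓝 0) := by
  have hnum : Tendsto (fun x => c * f x ^ 2 / g x₀) atTop (𝓝 0) := by
    simpa using ((hf.pow 2).const_mul c).div_const (g x₀)
  refine squeeze_zero' ?_ ?_ hnum
  · filter_upwards [eventually_ge_atTop x₀] with x hx
    exact div_nonneg (by positivity) (hg₀.trans_le (hg x hx)).le
  · filter_upwards [eventually_ge_atTop x₀] with x hx
    exact div_le_div_of_nonneg_left (by positivity) hg₀ (hg x hx)

end Quotient

theorem StrictAntiOn.bijOn_Ici_Ioc {φ : ℝ → ℝ} {a : ℝ} (hanti : StrictAntiOn φ (Ici a))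
    (hcont : ContinuousOn φ (Ici a)) (hpos : ∀ x ∈ Ici a, 0 < φ x)
    (hlim : Tendsto φ atTop (𝓝 0)) : BijOn φ (Ici a) (Ioc 0 (φ a)) := by
  refine ⟨fun x hx => ⟨hpos x hx, hanti.antitoneOn self_mem_Ici hx hx⟩, hanti.injOn, ?_⟩
  rintro y ⟨hy0, hya⟩
  obtain ⟨M, hMy, haM⟩ := ((hlim.eventually_lt_const hy0).and (eventually_ge_atTop a)).exists
  obtain ⟨x, hx, rfl⟩ :=
    intermediate_value_Icc' haM (hcont.mono Icc_subset_Ici_self) ⟨hMy.le, hya⟩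
  exact ⟨x, hx.1, rfl⟩

theorem stmt_2_general (lam0 : ℝ)
    (f g : ℝ → ℝ)
    (hfpos : ∀ l, lam0 ≤ l → 0 < f l) (hgpos : ∀ l, lam0 ≤ l → 0 < g l)
    (hfcont : ContinuousOn f (Ici lam0)) (hgcont : ContinuousOn g (Ici lam0))
    (hfanti : StrictAntiOn f (Ici lam0)) (hflim : Tendsto f atTop (nhds 0))
    (hgmono : StrictMonoOn g (Ici lam0))
    -- Ψ₀ is a concave index function
    (Ψ₀ : ℝ → ℝ)
    (hΨ₀pos : ∀ t, 0 < t → 0 < Ψ₀ t)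
    (hΨ₀lim : Tendsto Ψ₀ (nhdsWithin 0 (Ioi 0)) (nhds 0))
    (c : ℝ) (hc : 0 < c)
    (Θ : ℝ → ℝ) (hΘ : ∀ l, lam0 ≤ l → Θ l = c * f l ^ 2 / g l)
    (Ψ : ℝ → ℝ)
    (hΨ : ∀ t, Ψ t = sInf ((fun l => g l * Ψ₀ t + c * f l ^ 2) '' Ici lam0)) :
    ContinuousOn Θ (Ici lam0) ∧ StrictAntiOn Θ (Ici lam0) ∧
      BijOn Θ (Ici lam0) (Ioc 0 (Θ lam0)) ∧
      (∀ δ, 0 < δ → Ψ₀ δ ≤ Θ lam0 →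
        ∀ l, lam0 ≤ l → Θ l = Ψ₀ δ → Ψ δ ≤ 2 * c * f l ^ 2) ∧
      Tendsto Ψ (nhdsWithin 0 (Ioi 0)) (nhds 0) := by
  obtain rfl : Ψ = _ := funext hΨ
  have hΘeq : EqOn (fun l => c * f l ^ 2 / g l) Θ (Ici lam0) := fun l hl => (hΘ l hl).symm
  have hg : ∀ l ∈ Ici lam0, 0 ≤ g l := fun l hl => (hgpos l hl).le
  have hcf : ∀ l ∈ Ici lam0, 0 ≤ c * f l ^ 2 := fun l _ => by positivity
  have hcont : ContinuousOn Θ (Ici lam0) :=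
    ((continuousOn_const.mul (hfcont.pow 2)).div hgcont fun l hl => (hgpos l hl).ne').congr
      fun l hl => hΘ l hl
  have hanti : StrictAntiOn Θ (Ici lam0) :=
    (strictAntiOn_const_mul_sq_div hc hfpos hgpos hfanti hgmono.monotoneOn).congr hΘeq
  have hΘlim : Tendsto Θ atTop (𝓝 0) :=
    (tendsto_const_mul_sq_div_atTop_zero hc.le hflim (hgpos lam0 le_rfl)
      fun l hl => hgmono.monotoneOn self_mem_Ici hl hl).congr'
      (eventually_ge_atTop lam0 |>.mono fun l hl => hΘeq hl)
  have hΘpos : ∀ l ∈ Ici lam0, 0 < Θ l := fun l hl => by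
    have := hfpos l hl
    rw [hΘ l hl]
    exact div_pos (by positivity) (hgpos l hl)
  refine ⟨hcont, hanti, hanti.bijOn_Ici_Ioc hcont hΘpos hΘlim, ?_, ?_⟩
  · intro δ hδ _ l hl hΘl
    calc _ ≤ g l * Ψ₀ δ + c * f l ^ 2 := sInf_image_mul_add_le hg hcf (hΨ₀pos δ hδ).le hl
      _ = 2 * c * f l ^ 2 := by
        rw [← hΘl, hΘ l hl]
        field_simp [(hgpos l hl).ne']
        ring
  · refine tendsto_sInf_image_mul_add_zero hg hcf (fun ε hε => ?_)
      (eventually_nhdsWithin_of_forall fun t ht => (hΨ₀pos t ht).le) hΨ₀lim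
    have hcf0 : Tendsto (fun l => c * f l ^ 2) atTop (𝓝 0) := by
      simpa using (hflim.pow 2).const_mul c
    obtain ⟨l, hlε, hl⟩ := ((hcf0.eventually_lt_const hε).and (eventually_ge_atTop lam0)).exists
    exact ⟨l, hl, hlε⟩

/-- decay rate of `Ψ(t) = inf_{λ ≥ λ₀} ( g(λ)·Ψ₀(t) + c·f(λ)² )`.
The function `Θ(λ) = c·f(λ)²/g(λ)` is a continuous strictly decreasing bijection
from `[λ₀,∞)` onto `(0, Θ(λ₀)]`, and for `δ > 0` with `Ψ₀(δ) ≤ Θ(λ₀)` one has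
`Ψ(δ) ≤ 2c·f(Θ⁻¹(Ψ₀(δ)))²` (stated via the unique preimage); in particular
`Ψ(δ) → 0` as `δ → 0⁺`. -/
theorem stmt_2 (lam0 : ℝ) (hlam0 : 0 ≤ lam0)
    (f g : ℝ → ℝ)
    (hfpos : ∀ l, lam0 ≤ l → 0 < f l) (hgpos : ∀ l, lam0 ≤ l → 0 < g l)
    (hfcont : ContinuousOn f (Ici lam0)) (hgcont : ContinuousOn g (Ici lam0))
    (hfanti : StrictAntiOn f (Ici lam0)) (hflim : Tendsto f atTop (nhds 0))
    (hgmono : StrictMonoOn g (Ici lam0)) (hglim : Tendsto g atTop atTop)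
    -- Ψ₀ is a concave index function
    (Ψ₀ : ℝ → ℝ)
    (hΨ₀pos : ∀ t, 0 < t → 0 < Ψ₀ t)
    (hΨ₀cont : ContinuousOn Ψ₀ (Ioi 0))
    (hΨ₀mono : StrictMonoOn Ψ₀ (Ioi 0))
    (hΨ₀lim : Tendsto Ψ₀ (nhdsWithin 0 (Ioi 0)) (nhds 0))
    (hΨ₀conc : ConcaveOn ℝ (Ioi 0) Ψ₀)
    (c : ℝ) (hc : 0 < c)
    (Θ : ℝ → ℝ) (hΘ : ∀ l, lam0 ≤ l → Θ l = c * f l ^ 2 / g l)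
    (Ψ : ℝ → ℝ)
    (hΨ : ∀ t, Ψ t = sInf ((fun l => g l * Ψ₀ t + c * f l ^ 2) '' Ici lam0)) :
    ContinuousOn Θ (Ici lam0) ∧ StrictAntiOn Θ (Ici lam0) ∧
      BijOn Θ (Ici lam0) (Ioc 0 (Θ lam0)) ∧
      (∀ δ, 0 < δ → Ψ₀ δ ≤ Θ lam0 →
        ∀ l, lam0 ≤ l → Θ l = Ψ₀ δ → Ψ δ ≤ 2 * c * f l ^ 2) ∧
      Tendsto Ψ (nhdsWithin 0 (Ioi 0)) (nhds 0) :=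
  stmt_2_general lam0 f g hfpos hgpos hfcont hgcont hfanti hflim hgmono Ψ₀ hΨ₀pos hΨ₀lim c hc Θ hΘ Ψ
    hΨ
end

section
/- Let s > 0, c > 0 and ε₀ > 0. Then there exists a constant C > 0, depending only on s, c and ε₀, such that for all real numbers A, B, β ≥ 0 satisfying β ≤ B and β ≤ (c/ε)·A + ε^s·B for every ε ∈ (0, ε₀], one has β ≤ C·A^{s/(1+s)}·B^{1/(1+s)}. -/
/-!
If `A = 0`, letting `ε → 0` in `β ≤ c/ε·A + ε^s·B` gives `β ≤ 0`;
if `B = 0`, so does `β ≤ B`.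
Otherwise both terms equal `M = A^(s/(1+s)) B^(1/(1+s))` at `ε* = (A/B)^(1/(1+s))`.
If `ε* ≤ ε₀` this choice of `ε` gives `β ≤ (c+1) M`; if `ε* > ε₀`, then
`β ≤ B = ε*^(-s) · ε*^s B ≤ ε₀^(-s) M`.
-/

open Set Filter Topology Real

/-- The value of `ε` that balances `c/ε·A` against `ε^s·B`. -/
noncomputable def balancingScale (s A B : ℝ) : ℝ := (A / B) ^ (1 / (1 + s))

section balancingScale

variable {s A B : ℝ}

lemma balancingScale_pos (hA : 0 < A) (hB : 0 < B) : 0 < balancingScale s A B :=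
  rpow_pos_of_pos (div_pos hA hB) _

lemma rpow_mul_rpow_one_div_one_add (hs : 0 < 1 + s) (hA : 0 < A) :
    A ^ (s / (1 + s)) * A ^ (1 / (1 + s)) = A := by
  rw [← rpow_add hA, ← add_div, add_comm s 1, div_self hs.ne', rpow_one]

lemma balancingScale_rpow_mul (hs : 0 < 1 + s) (hA : 0 < A) (hB : 0 < B) :
    balancingScale s A B ^ s * B = A ^ (s / (1 + s)) * B ^ (1 / (1 + s)) := by
  rw [balancingScale, ← rpow_mul (div_pos hA hB).le, one_div_mul_eq_div, div_rpow hA.le hB.le,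
    div_mul_eq_mul_div, div_eq_iff (by positivity)]
  conv_lhs => rw [← rpow_mul_rpow_one_div_one_add hs hB]
  ring

lemma div_balancingScale (hs : 0 < 1 + s) (hA : 0 < A) (hB : 0 < B) :
    A / balancingScale s A B = A ^ (s / (1 + s)) * B ^ (1 / (1 + s)) := by
  rw [balancingScale, div_rpow hA.le hB.le, div_div_eq_mul_div, div_eq_iff (by positivity)]
  conv_lhs => rw [← rpow_mul_rpow_one_div_one_add hs hA]
  ring

end balancingScale

lemma nonpos_of_forall_le_rpow_mul {s ε₀ B β : ℝ} (hs : 0 < s) (hε₀ : 0 < ε₀)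
    (h : ∀ ε ∈ Ioc 0 ε₀, β ≤ ε ^ s * B) : β ≤ 0 := by
  have h_lim : Tendsto (fun ε : ℝ => ε ^ s * B) (𝓝[>] 0) (𝓝 0) := by
    have h_cont := ((continuousAt_rpow_const 0 s (Or.inr hs.le)).mul_const B).tendsto
    rw [zero_rpow hs.ne', zero_mul] at h_cont
    exact h_cont.mono_left nhdsWithin_le_nhds
  exact ge_of_tendsto h_lim (eventually_of_mem (Ioc_mem_nhdsGT hε₀) h)

lemma le_max_mul_rpow_mul_rpow_of_forall_le {s c ε₀ A B β : ℝ} (hs : 0 < s)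
    (hε₀ : 0 < ε₀) (hA : 0 < A) (hB : 0 < B) (hβB : β ≤ B)
    (h : ∀ ε ∈ Ioc 0 ε₀, β ≤ c / ε * A + ε ^ s * B) :
    β ≤ max (c + 1) (ε₀ ^ (-s)) * (A ^ (s / (1 + s)) * B ^ (1 / (1 + s))) := by
  have hs' : 0 < 1 + s := by linarith
  set ε := balancingScale s A B
  set M := A ^ (s / (1 + s)) * B ^ (1 / (1 + s))
  have hε : 0 < ε := balancingScale_pos hA hB
  have hM : 0 ≤ M := by positivity
  rcases le_or_gt ε ε₀ with hεε₀ | hε₀ε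
  · calc β ≤ c / ε * A + ε ^ s * B := h ε ⟨hε, hεε₀⟩
      _ = (c + 1) * M := by
        rw [div_mul_comm, div_balancingScale hs' hA hB, balancingScale_rpow_mul hs' hA hB]
        ring
      _ ≤ _ := mul_le_mul_of_nonneg_right (le_max_left _ _) hM
  · calc β ≤ B := hβB
      _ = ε ^ (-s) * (ε ^ s * B) := by
        rw [← mul_assoc, ← rpow_add hε, neg_add_cancel, rpow_zero, one_mul]
      _ = ε ^ (-s) * M := by rw [balancingScale_rpow_mul hs' hA hB]
      _ ≤ ε₀ ^ (-s) * M :=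
        mul_le_mul_of_nonneg_right
          (rpow_le_rpow_of_nonpos hε₀ hε₀ε.le (neg_nonpos.mpr hs.le)) hM
      _ ≤ _ := mul_le_mul_of_nonneg_right (le_max_right _ _) hM

/-- interpolation-type inequality deduced from a family of
`β ≤ (c/ε)·A + ε^s·B` estimates (Lemma 2.3 / Corollary 2.1 (i) of Bourgeois). -/
theorem stmt_5 (s c ε₀ : ℝ) (hs : 0 < s) (hc : 0 < c) (hε₀ : 0 < ε₀) :
    ∃ C > 0, ∀ A B β : ℝ, 0 ≤ A → 0 ≤ B → 0 ≤ β → β ≤ B →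
      (∀ ε : ℝ, ε ∈ Ioc 0 ε₀ → β ≤ c / ε * A + ε ^ s * B) →
      β ≤ C * A ^ (s / (1 + s)) * B ^ (1 / (1 + s)) := by
  have hs' : 0 < 1 + s := by linarith
  refine ⟨max (c + 1) (ε₀ ^ (-s)), by positivity, fun A B β hA hB _ hβB h ↦ ?_⟩
  rcases hA.eq_or_lt with rfl | hA
  · have hβ : β ≤ 0 :=
      nonpos_of_forall_le_rpow_mul hs hε₀ fun ε hε ↦ by simpa using h ε hε
    rwa [zero_rpow (div_pos hs hs').ne', mul_zero, zero_mul]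
  rcases hB.eq_or_lt with rfl | hB
  · rwa [zero_rpow (one_div_pos.mpr hs').ne', mul_zero]
  rw [mul_assoc]
  exact le_max_mul_rpow_mul_rpow_of_forall_le hs hε₀ hA hB hβB h
end

section
/- Let c > 0, ε₀ > 0, κ > 0 and C₀ > 0. Then there exists a constant C > 0, depending only on c, ε₀, κ and C₀, such that for all real numbers β, δ, M satisfying 0 ≤ β ≤ M, 0 < δ < C₀·M, and β ≤ e^{c/ε}·δ + ε^κ·M for every ε ∈ (0, ε₀], one has β ≤ C·M / (log(C₀·M/δ))^κ. -/
open Set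

/-- logarithmic stability estimate deduced from a family of
`β ≤ e^{c/ε}·δ + ε^κ·M` estimates (Lemma 2.3 / Corollary 2.1 (ii) of Bourgeois). -/
theorem stmt_6 (c ε₀ κ C₀ : ℝ) (hc : 0 < c) (hε₀ : 0 < ε₀) (hκ : 0 < κ) (hC₀ : 0 < C₀) :
    ∃ C > 0, ∀ β δ M : ℝ, 0 ≤ β → β ≤ M → 0 < δ → δ < C₀ * M →
      (∀ ε : ℝ, ε ∈ Ioc 0 ε₀ → β ≤ Real.exp (c / ε) * δ + ε ^ κ * M) →
      β ≤ C * M / Real.log (C₀ * M / δ) ^ κ := by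
  set n := ⌈κ⌉₊ with hn
  set T := max 1 (2 * c / ε₀) with hT
  have hT1 : (1:ℝ) ≤ T := le_max_left _ _
  have hT0 : (0:ℝ) < T := lt_of_lt_of_le one_pos hT1
  have hTκ : (0:ℝ) < T ^ κ := Real.rpow_pos_of_pos hT0 κ
  have h2c : (0:ℝ) < 2 * c := by linarith
  have h2cκ : (0:ℝ) < (2*c) ^ κ := Real.rpow_pos_of_pos h2c κ
  have hfac : (0:ℝ) < C₀ * 2 ^ n * n.factorial := by positivity
  refine ⟨T ^ κ + C₀ * 2 ^ n * n.factorial + (2*c) ^ κ, by positivity, ?_⟩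
  intro β δ M hβ0 hβM hδ0 hδM hfam
  have hM : 0 < M := by
    rcases lt_or_ge 0 M with h | h
    · exact h
    · exfalso; nlinarith
  have hq : 1 < C₀ * M / δ := by
    rw [lt_div_iff₀ hδ0]; linarith
  have hL0 : 0 < Real.log (C₀ * M / δ) := Real.log_pos hq
  set L := Real.log (C₀ * M / δ) with hLdef
  have hLκ : 0 < L ^ κ := Real.rpow_pos_of_pos hL0 κ
  rw [le_div_iff₀ hLκ]
  by_cases hcase : L ≤ T
  · have h1 : L ^ κ ≤ T ^ κ := Real.rpow_le_rpow hL0.le hcase hκ.le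
    have h2 : β * L ^ κ ≤ M * T ^ κ := by
      apply mul_le_mul hβM h1 hLκ.le hM.le
    have hexpand : (T ^ κ + C₀ * 2 ^ n * n.factorial + (2*c) ^ κ) * M
        = M * T ^ κ + C₀ * 2 ^ n * n.factorial * M + (2*c) ^ κ * M := by ring
    have h3 : 0 ≤ C₀ * 2 ^ n * (n.factorial:ℝ) * M := by positivity
    have h4 : 0 ≤ (2*c) ^ κ * M := by positivity
    rw [hexpand]
    linarith
  · push_neg at hcase
    have hL1 : 1 < L := lt_of_le_of_lt hT1 hcase
    have hLε : 2 * c / ε₀ < L := lt_of_le_of_lt (le_max_right _ _) hcase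
    set ε := 2 * c / L with hε
    have hε0 : 0 < ε := by positivity
    have hεε₀ : ε ≤ ε₀ := by
      rw [hε, div_le_iff₀ hL0]
      calc 2 * c = ε₀ * (2 * c / ε₀) := by field_simp
        _ ≤ ε₀ * L := by nlinarith
    have hb := hfam ε ⟨hε0, hεε₀⟩
    have hcε : c / ε = L / 2 := by
      rw [hε]; field_simp
    have hexpL : Real.exp L = C₀ * M / δ := Real.exp_log (by linarith)
    have hδeq : δ = C₀ * M / Real.exp L := by
      rw [hexpL]; field_simp
    have hsplit : Real.exp L = Real.exp (L/2) * Real.exp (L/2) := by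
      rw [← Real.exp_add]; ring_nf
    have hterm1 : Real.exp (c / ε) * δ = C₀ * M / Real.exp (L/2) := by
      rw [hcε, hδeq, hsplit]
      field_simp
    have hterm2 : ε ^ κ = (2*c) ^ κ / L ^ κ := by
      rw [hε, Real.div_rpow h2c.le hL0.le]
    -- bound L ^ κ ≤ 2^n * n! * exp (L/2)
    have hκn : κ ≤ (n : ℝ) := Nat.le_ceil κ
    have hLκn : L ^ κ ≤ L ^ (n : ℝ) := Real.rpow_le_rpow_of_exponent_le hL1.le hκn
    have hLn : L ^ (n : ℝ) = L ^ n := Real.rpow_natCast L n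
    have hpow : (L/2) ^ n / n.factorial ≤ Real.exp (L/2) :=
      Real.pow_div_factorial_le_exp (x := L/2) (by positivity) n
    have hfacpos : (0:ℝ) < n.factorial := by positivity
    have hLnbound : (L:ℝ) ^ n ≤ 2 ^ n * n.factorial * Real.exp (L/2) := by
      have : (L:ℝ) ^ n = 2 ^ n * (L/2) ^ n := by
        rw [← mul_pow]; ring_nf
      rw [this]
      have h := (div_le_iff₀ hfacpos).mp hpow
      calc (2:ℝ) ^ n * (L/2) ^ n ≤ 2 ^ n * (Real.exp (L/2) * n.factorial) := by
            apply mul_le_mul_of_nonneg_left h (by positivity)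
        _ = 2 ^ n * n.factorial * Real.exp (L/2) := by ring
    have hLκbound : L ^ κ ≤ 2 ^ n * n.factorial * Real.exp (L/2) := by
      rw [← hLn] at hLnbound; linarith
    have hexppos : (0:ℝ) < Real.exp (L/2) := Real.exp_pos _
    -- now combine
    have hstep : β * L ^ κ ≤ (C₀ * M / Real.exp (L/2)) * L ^ κ + (2*c) ^ κ * M := by
      rw [hterm1, hterm2] at hb
      have : β ≤ C₀ * M / Real.exp (L/2) + (2*c) ^ κ / L ^ κ * M := hb
      calc β * L ^ κ ≤ (C₀ * M / Real.exp (L/2) + (2*c) ^ κ / L ^ κ * M) * L ^ κ :=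
            mul_le_mul_of_nonneg_right this hLκ.le
        _ = (C₀ * M / Real.exp (L/2)) * L ^ κ + (2*c) ^ κ / L ^ κ * L ^ κ * M := by ring
        _ = (C₀ * M / Real.exp (L/2)) * L ^ κ + (2*c) ^ κ * M := by
            rw [div_mul_cancel₀ _ (ne_of_gt hLκ)]
    have hfirst : (C₀ * M / Real.exp (L/2)) * L ^ κ ≤ C₀ * 2 ^ n * n.factorial * M := by
      rw [div_mul_eq_mul_div, div_le_iff₀ hexppos]
      calc C₀ * M * L ^ κ ≤ C₀ * M * (2 ^ n * n.factorial * Real.exp (L/2)) := by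
            apply mul_le_mul_of_nonneg_left hLκbound (by positivity)
        _ = C₀ * 2 ^ n * n.factorial * M * Real.exp (L/2) := by ring
    have hexpand : (T ^ κ + C₀ * 2 ^ n * n.factorial + (2*c) ^ κ) * M
        = T ^ κ * M + C₀ * 2 ^ n * n.factorial * M + (2*c) ^ κ * M := by ring
    have hTM : 0 ≤ T ^ κ * M := by positivity
    rw [hexpand]
    linarith
end

section
/- Let H be a complex Hilbert space with an orthonormal (Hilbert) basis (e_n)_{n∈ℕ}, and let (λ_n)_{n∈ℕ} be real numbers with λ_n ≥ 1 for all n. Let s ∈ (0, 1/2], and let q† ∈ H satisfy K² := Σ_{n∈ℕ} λ_n^{2s}·|⟨q†, e_n⟩|² < ∞. For λ ≥ 1, let P_λ denote the orthogonal projection P_λ x = Σ_{n : λ_n ≤ λ} ⟨x, e_n⟩·e_n. Then for every v ∈ H and every λ ≥ 1, Re⟨q†, P_λ v⟩ ≤ K · λ^{1/2−s} · ( Σ_{n∈ℕ} λ_n^{−1}·|⟨v, e_n⟩|² )^{1/2}. -/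
open scoped InnerProductSpace

/-- cross-term estimate
`Re⟨q†, P_λ v⟩ ≤ K·λ^{1/2−s}·(Σ_n λ_n^{−1}|⟨v,e_n⟩|²)^{1/2}`, where
`P_λ v = Σ_{λ_n ≤ λ} ⟨v,e_n⟩ e_n` and `K² = Σ_n λ_n^{2s}|⟨q†,e_n⟩|²`. -/
theorem stmt_9 {H : Type*} [NormedAddCommGroup H] [InnerProductSpace ℂ H] [CompleteSpace H]
    (e : HilbertBasis ℕ ℂ H) (lam : ℕ → ℝ) (hlam : ∀ n, 1 ≤ lam n)
    (s : ℝ) (hs : s ∈ Set.Ioc (0 : ℝ) (1 / 2))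
    (qd : H) (K : ℝ) (hK : 0 ≤ K)
    (hsum : HasSum (fun n => lam n ^ (2 * s) * ‖⟪(e n : H), qd⟫_ℂ‖ ^ 2) (K ^ 2))
    (v : H) (Λ : ℝ) (hΛ : 1 ≤ Λ) :
    (⟪qd, ∑' n, (if lam n ≤ Λ then ⟪(e n : H), v⟫_ℂ • (e n : H) else 0)⟫_ℂ).re ≤
      K * Λ ^ (1 / 2 - s) * (∑' n, (lam n)⁻¹ * ‖⟪(e n : H), v⟫_ℂ‖ ^ 2) ^ ((1 : ℝ) / 2) := by
  have hl0 : ∀ n, (0 : ℝ) < lam n := fun n => lt_of_lt_of_le one_pos (hlam n)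
  have hΛ0 : (0 : ℝ) < Λ := lt_of_lt_of_le one_pos hΛ
  set a : ℕ → ℝ := fun n => ‖⟪(e n : H), qd⟫_ℂ‖ with ha
  set b : ℕ → ℝ := fun n => ‖⟪(e n : H), v⟫_ℂ‖ with hb
  have ha0 : ∀ n, 0 ≤ a n := fun n => norm_nonneg _
  have hb0 : ∀ n, 0 ≤ b n := fun n => norm_nonneg _
  -- summability of b^2
  have hb2 : Summable (fun n => b n ^ 2) := by
    have h := (lp.memℓp (e.repr v)).summable (by norm_num : (0:ℝ) < (2 : ENNReal).toReal)
    refine h.congr fun n => ?_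
    rw [e.repr_apply_apply, ENNReal.toReal_ofNat, Real.rpow_two]
  -- the truncated coefficient sequence
  set c : ℕ → ℂ := fun n => if lam n ≤ Λ then ⟪(e n : H), v⟫_ℂ else 0 with hc
  have hcb : ∀ n, ‖c n‖ ≤ b n := by
    intro n
    simp only [hc]
    split_ifs with h
    · exact le_rfl
    · simp only [norm_zero]; exact hb0 n
  have hc2 : Summable (fun n => ‖c n‖ ^ (2 : ENNReal).toReal) := by
    have heq : ∀ n, ‖c n‖ ^ (2 : ENNReal).toReal = ‖c n‖ ^ 2 := fun n => by
      rw [ENNReal.toReal_ofNat, Real.rpow_two]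
    rw [funext heq]
    exact Summable.of_nonneg_of_le (fun n => by positivity)
      (fun n => pow_le_pow_left₀ (norm_nonneg _) (hcb n) 2) hb2
  have hmem : Memℓp c 2 := memℓp_gen hc2
  set g : lp (fun _ : ℕ => ℂ) 2 := ⟨c, hmem⟩ with hg
  set x : H := e.repr.symm g with hx
  have hxsum : HasSum (fun n => c n • (e n : H)) x := e.hasSum_repr_symm g
  have hrepr : ∀ n, ⟪(e n : H), x⟫_ℂ = c n := by
    intro n
    rw [← e.repr_apply_apply, hx, LinearIsometryEquiv.apply_symm_apply]
  -- identify the tsum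
  have htsum : (∑' n, (if lam n ≤ Λ then ⟪(e n : H), v⟫_ℂ • (e n : H) else 0)) = x := by
    have heq : (fun n => (if lam n ≤ Λ then ⟪(e n : H), v⟫_ℂ • (e n : H) else 0))
        = fun n => c n • (e n : H) := by
      funext n
      simp only [hc]
      split_ifs with h
      · rfl
      · rw [zero_smul]
    rw [heq]
    exact hxsum.tsum_eq
  rw [htsum]
  -- expand the inner product
  have hinner : HasSum (fun n => ⟪qd, (e n : H)⟫_ℂ * c n) ⟪qd, x⟫_ℂ := by
    have h := e.hasSum_inner_mul_inner qd x
    simpa only [hrepr] using h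
  have hre : HasSum (fun n => (⟪qd, (e n : H)⟫_ℂ * c n).re) (⟪qd, x⟫_ℂ).re :=
    hinner.mapL Complex.reCLM
  rw [← hre.tsum_eq]
  -- the two ℓ² factors
  set f1 : ℕ → ℝ := fun n => lam n ^ s * a n with hf1
  set f2 : ℕ → ℝ := fun n => lam n ^ (-(1/2) : ℝ) * b n with hf2
  have hf1nn : ∀ n, 0 ≤ f1 n := fun n => mul_nonneg (Real.rpow_nonneg (hl0 n).le _) (ha0 n)
  have hf2nn : ∀ n, 0 ≤ f2 n := fun n => mul_nonneg (Real.rpow_nonneg (hl0 n).le _) (hb0 n)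
  have hf1sq : ∀ n, f1 n ^ (2 : ℝ) = lam n ^ (2 * s) * a n ^ 2 := by
    intro n
    rw [hf1, Real.mul_rpow (Real.rpow_nonneg (hl0 n).le _) (ha0 n),
      ← Real.rpow_mul (hl0 n).le, Real.rpow_two, mul_comm s 2]
  have hf2sq : ∀ n, f2 n ^ (2 : ℝ) = (lam n)⁻¹ * b n ^ 2 := by
    intro n
    rw [hf2, Real.mul_rpow (Real.rpow_nonneg (hl0 n).le _) (hb0 n),
      ← Real.rpow_mul (hl0 n).le, Real.rpow_two,
      show (-(1/2) : ℝ) * 2 = -1 by norm_num, Real.rpow_neg_one]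
  have hf1sum : Summable (fun n => f1 n ^ (2 : ℝ)) := by
    rw [funext hf1sq]; exact hsum.summable
  have hf2sum : Summable (fun n => f2 n ^ (2 : ℝ)) := by
    rw [funext hf2sq]
    refine Summable.of_nonneg_of_le
      (fun n => mul_nonneg (inv_nonneg.mpr (hl0 n).le) (sq_nonneg _)) (fun n => ?_) hb2
    have h1 : (lam n)⁻¹ ≤ 1 := inv_le_one_of_one_le₀ (hlam n)
    calc (lam n)⁻¹ * b n ^ 2 ≤ 1 * b n ^ 2 :=
          mul_le_mul_of_nonneg_right h1 (sq_nonneg _)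
      _ = b n ^ 2 := one_mul _
  have hconj : Real.HolderConjugate 2 2 := Real.HolderConjugate.two_two
  obtain ⟨hCSsum, hCSle⟩ :=
    Real.summable_and_inner_le_Lp_mul_Lq_tsum_of_nonneg hconj hf1nn hf2nn hf1sum hf2sum
  -- termwise bound
  have hterm : ∀ n, (⟪qd, (e n : H)⟫_ℂ * c n).re ≤ Λ ^ (1/2 - s) * (f1 n * f2 n) := by
    intro n
    by_cases h : lam n ≤ Λ
    · have h1 : (⟪qd, (e n : H)⟫_ℂ * c n).re ≤ a n * b n := by
        calc (⟪qd, (e n : H)⟫_ℂ * c n).re ≤ ‖⟪qd, (e n : H)⟫_ℂ * c n‖ := (Complex.re_le_norm _).trans le_rfl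
          _ = ‖⟪qd, (e n : H)⟫_ℂ‖ * ‖c n‖ := norm_mul _ _
          _ ≤ a n * b n := by
              rw [ha, ← norm_inner_symm]
              exact mul_le_mul_of_nonneg_left (hcb n) (norm_nonneg _)
      refine h1.trans ?_
      have key : (1 : ℝ) ≤ Λ ^ (1/2 - s) * lam n ^ (s - 1/2) := by
        have h2 : lam n ^ ((1:ℝ)/2 - s) ≤ Λ ^ ((1:ℝ)/2 - s) :=
          Real.rpow_le_rpow (hl0 n).le h (by linarith [hs.2])
        have h3 : lam n ^ (s - 1/2) = (lam n ^ ((1:ℝ)/2 - s))⁻¹ := by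
          rw [← Real.rpow_neg (hl0 n).le]; ring_nf
        rw [h3, ← div_eq_mul_inv, le_div_iff₀ (Real.rpow_pos_of_pos (hl0 n) _)]
        simpa using h2
      have hab : 0 ≤ a n * b n := mul_nonneg (ha0 n) (hb0 n)
      calc a n * b n = 1 * (a n * b n) := (one_mul _).symm
        _ ≤ (Λ ^ (1/2 - s) * lam n ^ (s - 1/2)) * (a n * b n) :=
            mul_le_mul_of_nonneg_right key hab
        _ = Λ ^ (1/2 - s) * (f1 n * f2 n) := by
            rw [hf1, hf2]
            have h4 : lam n ^ (s - 1/2) = lam n ^ s * lam n ^ (-(1/2) : ℝ) := by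
              rw [← Real.rpow_add (hl0 n)]; ring_nf
            rw [h4]; ring
    · simp only [hc, if_neg h, mul_zero, Complex.zero_re]
      have : 0 ≤ Λ ^ ((1:ℝ)/2 - s) := Real.rpow_nonneg hΛ0.le _
      exact mul_nonneg this (mul_nonneg (hf1nn n) (hf2nn n))
  -- combine
  have hsum' : Summable (fun n => (⟪qd, (e n : H)⟫_ℂ * c n).re) := hre.summable
  calc (∑' n, (⟪qd, (e n : H)⟫_ℂ * c n).re)
      ≤ ∑' n, Λ ^ (1/2 - s) * (f1 n * f2 n) :=
        Summable.tsum_le_tsum hterm hsum' (hCSsum.mul_left _)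
    _ = Λ ^ (1/2 - s) * ∑' n, f1 n * f2 n := tsum_mul_left
    _ ≤ Λ ^ (1/2 - s) * ((∑' n, f1 n ^ (2:ℝ)) ^ ((1:ℝ)/2) * (∑' n, f2 n ^ (2:ℝ)) ^ ((1:ℝ)/2)) := by
        refine mul_le_mul_of_nonneg_left ?_ (Real.rpow_nonneg hΛ0.le _)
        convert hCSle using 3 <;> norm_num
    _ = K * Λ ^ (1/2 - s) * (∑' n, (lam n)⁻¹ * ‖⟪(e n : H), v⟫_ℂ‖ ^ 2) ^ ((1:ℝ)/2) := by
        have hK2 : (∑' n, f1 n ^ (2:ℝ)) = K ^ 2 := by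
          rw [funext hf1sq]; exact hsum.tsum_eq
        have hKpow : (K ^ 2 : ℝ) ^ ((1:ℝ)/2) = K := by
          rw [← Real.rpow_two, ← Real.rpow_mul hK]
          norm_num
        rw [hK2, hKpow, funext hf2sq]
        ring
end
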